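/- Atomic points generate: let P be a finite set and 𝒟 an arbitrary subset of (D)^P. Then for every y ∈ 𝒟 there exist x ∈ 𝒟_At and σ : A → D such that σ · x = y. -/
import Mathlib


inductive Sign where
  | pos | neg
deriving DecidableEq

def Sign.flip : Sign → Sign
  | .pos => .neg
  | .neg => .pos

/-- Points of the relational model over a set `A` of atoms:
signed atoms `(δ, γ)` with `γ ∈ A ∪ {∗}` (`∗` encoded as `none`),
signed pairs and signed finite multisets (encoded as lists). -/
inductive D (A : Type) where
  | atom : Sign → Option A → D A
  | pair : Sign → D A → D A → D A
  | mset : Sign → List (D A) → D A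

namespace D

variable {A : Type}

/-- Duality: flip every sign recursively. -/
def dual : D A → D A
  | atom s g => atom s.flip g
  | pair s a b => pair s.flip (dual a) (dual b)
  | mset s l => mset s.flip (l.attach.map fun ⟨x, _hx⟩ => dual x)
decreasing_by
  all_goals simp_wf
  all_goals try omega
  all_goals (have := List.sizeOf_lt_of_mem _hx; omega)

/-- The substitution action `σ · α`. -/
def subst (σ : A → D A) : D A → D A
  | atom .pos (some γ) => σ γ
  | atom .neg (some γ) => dual (σ γ)
  | atom s none => atom s none
  | pair s a b => pair s (subst σ a) (subst σ b)
  | mset s l => mset s (l.attach.map fun ⟨x, _hx⟩ => subst σ x)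
decreasing_by
  all_goals simp_wf
  all_goals try omega
  all_goals (have := List.sizeOf_lt_of_mem _hx; omega)

/-- Size of a point. -/
def size : D A → ℕ
  | atom _ _ => 1
  | pair _ a b => 1 + size a + size b
  | mset _ l => 1 + (l.attach.map fun ⟨x, _hx⟩ => size x).sum
decreasing_by
  all_goals simp_wf
  all_goals try omega
  all_goals (have := List.sizeOf_lt_of_mem _hx; omega)

/-- Height of a point. -/
def height : D A → ℕ
  | atom _ _ => 0
  | pair _ a b => 1 + max (height a) (height b)
  | mset _ l => 1 + ((l.attach.map fun ⟨x, _hx⟩ => height x).foldr max 0)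
decreasing_by
  all_goals simp_wf
  all_goals try omega
  all_goals (have := List.sizeOf_lt_of_mem _hx; omega)

/-- The set of atoms of `A` occurring in a point. -/
def atoms : D A → Set A
  | atom _ (some γ) => {γ}
  | atom _ none => ∅
  | pair _ a b => atoms a ∪ atoms b
  | mset _ l => (l.attach.map fun ⟨x, _hx⟩ => atoms x).foldr (· ∪ ·) ∅
decreasing_by
  all_goals simp_wf
  all_goals try omega
  all_goals (have := List.sizeOf_lt_of_mem _hx; omega)

/-- A point is a signed atom if it is of the form `(δ, γ)` with `γ ∈ A`. -/
def IsSignedAtom (α : D A) : Prop := ∃ s γ, α = atom s (some γ)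

/-- `σ` is a renaming of `α` if it sends every atom occurring in `α` to a signed atom. -/
def IsRenaming (σ : A → D A) (α : D A) : Prop := ∀ γ ∈ atoms α, IsSignedAtom (σ γ)

end D

/-- Unsigned points: the shape of `D` with the signs forgotten. -/
inductive Dbar (A : Type) where
  | atom : Option A → Dbar A
  | pair : Dbar A → Dbar A → Dbar A
  | mset : List (Dbar A) → Dbar A

namespace Dbar

variable {A : Type}

/-- Renaming action of a function `τ : A → A` on unsigned points. -/
def rename (τ : A → A) : Dbar A → Dbar A
  | atom (some γ) => atom (some (τ γ))
  | atom none => atom none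
  | pair a b => pair (rename τ a) (rename τ b)
  | mset l => mset (l.attach.map fun ⟨x, _hx⟩ => rename τ x)
decreasing_by
  all_goals simp_wf
  all_goals try omega
  all_goals (have := List.sizeOf_lt_of_mem _hx; omega)

end Dbar

namespace D

variable {A : Type}

/-- The sign-forgetting map `U : D → D̄`. -/
def U : D A → Dbar A
  | atom _ g => .atom g
  | pair _ a b => .pair (U a) (U b)
  | mset _ l => .mset (l.attach.map fun ⟨x, _hx⟩ => U x)
decreasing_by
  all_goals simp_wf
  all_goals try omega
  all_goals (have := List.sizeOf_lt_of_mem _hx; omega)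

/-- The underlying atom-map `U(σ) : A → A` of a substitution `σ : A → D A`:
it sends `γ` to the atom underlying the signed atom `σ γ` when `σ γ` is a signed
atom, and to `γ` itself otherwise. -/
def Usub (σ : A → D A) (γ : A) : A :=
  match σ γ with
  | atom _ (some γ') => γ'
  | _ => γ

/-- Number of occurrences (at all depths) of the signed atom `(s, γ)` in a point. -/
def occ [DecidableEq A] (s : Sign) (γ : A) : D A → ℕ
  | atom s' (some γ') => if s' = s ∧ γ' = γ then 1 else 0
  | atom _ none => 0
  | pair _ a b => occ s γ a + occ s γ b
  | mset _ l => (l.attach.map fun ⟨x, _hx⟩ => occ s γ x).sum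
decreasing_by
  all_goals simp_wf
  all_goals try omega
  all_goals (have := List.sizeOf_lt_of_mem _hx; omega)

end D

/-- Pointwise substitution action on families of points. -/
def substOn {A P : Type} (σ : A → D A) (x : P → D A) : P → D A :=
  fun p => D.subst σ (x p)

/-- `σ` is a renaming of the family `x` if it is a renaming of each `x p`. -/
def RenamingOn {A P : Type} (σ : A → D A) (x : P → D A) : Prop :=
  ∀ p, D.IsRenaming σ (x p)

/-- The set of `𝒟`-atomic elements of `𝒟`: those `x ∈ 𝒟` such that whenever
`σ · y = x` with `y ∈ 𝒟`, the substitution `σ` is a renaming of `y`. -/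
def atomicSet {A P : Type} (𝒟 : Set (P → D A)) : Set (P → D A) :=
  {x | x ∈ 𝒟 ∧ ∀ (σ : A → D A) (y : P → D A), y ∈ 𝒟 → substOn σ y = x → RenamingOn σ y}

/-- A family of points is `A`-injective if every signed atom occurs at most once in it. -/
def AInjective {A P : Type} [DecidableEq A] [Fintype P] (x : P → D A) : Prop :=
  ∀ (s : Sign) (γ : A), (∑ p, D.occ s γ (x p)) ≤ 1

namespace D
variable {A : Type}

theorem attach_map' {α β : Type*} (l : List α) (f : α → β) :
    (l.attach.map fun x => f x.1) = l.map f := by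
  simp only [List.map_subtype, List.unattach_attach]

@[simp] theorem subst_atom_none (σ : A → D A) (s : Sign) :
    subst σ (atom s none) = atom s none := by cases s <;> rw [subst]

@[simp] theorem subst_atom_pos (σ : A → D A) (γ : A) :
    subst σ (atom .pos (some γ)) = σ γ := by rw [subst]

@[simp] theorem subst_atom_neg (σ : A → D A) (γ : A) :
    subst σ (atom .neg (some γ)) = dual (σ γ) := by rw [subst]

@[simp] theorem subst_pair (σ : A → D A) (s : Sign) (a b : D A) :
    subst σ (pair s a b) = pair s (subst σ a) (subst σ b) := by rw [subst]

@[simp] theorem subst_mset (σ : A → D A) (s : Sign) (l : List (D A)) :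
    subst σ (mset s l) = mset s (l.map (subst σ)) := by
  rw [subst, attach_map']

@[simp] theorem dual_atom (s : Sign) (g : Option A) :
    dual (atom s g) = atom s.flip g := by rw [dual]

@[simp] theorem dual_pair (s : Sign) (a b : D A) :
    dual (pair s a b) = pair s.flip (dual a) (dual b) := by rw [dual]

@[simp] theorem dual_mset (s : Sign) (l : List (D A)) :
    dual (mset s l) = mset s.flip (l.map dual) := by rw [dual, attach_map']

@[simp] theorem size_atom (s : Sign) (g : Option A) : size (atom s g) = 1 := by rw [size]

@[simp] theorem size_pair (s : Sign) (a b : D A) :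
    size (pair s a b) = 1 + size a + size b := by rw [size]

@[simp] theorem size_mset (s : Sign) (l : List (D A)) :
    size (mset s l) = 1 + (l.map size).sum := by rw [size, attach_map']

end D
namespace D
variable {A : Type}

theorem myInd {motive : D A → Prop}
    (ha : ∀ s g, motive (atom s g))
    (hp : ∀ s a b, motive a → motive b → motive (pair s a b))
    (hm : ∀ s l, (∀ x ∈ l, motive x) → motive (mset s l)) :
    ∀ α, motive α
  | atom s g => ha s g
  | pair s a b => hp s a b (myInd ha hp hm a) (myInd ha hp hm b)
  | mset s l => hm s l (fun x _hx => myInd ha hp hm x)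
decreasing_by
  all_goals simp_wf
  all_goals try omega
  all_goals (have := List.sizeOf_lt_of_mem _hx; omega)

/-- Number of atom-of-`A` occurrences. -/
def acnt : D A → ℕ
  | atom _ (some _) => 1
  | atom _ none => 0
  | pair _ a b => acnt a + acnt b
  | mset _ l => (l.attach.map fun ⟨x, _hx⟩ => acnt x).sum
decreasing_by
  all_goals simp_wf
  all_goals try omega
  all_goals (have := List.sizeOf_lt_of_mem _hx; omega)

@[simp] theorem acnt_atom_some (s : Sign) (γ : A) : acnt (atom s (some γ)) = 1 := by rw [acnt]
@[simp] theorem acnt_atom_none (s : Sign) : acnt (atom s (none : Option A)) = 0 := by rw [acnt]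
@[simp] theorem acnt_pair (s : Sign) (a b : D A) : acnt (pair s a b) = acnt a + acnt b := by
  rw [acnt]
@[simp] theorem acnt_mset (s : Sign) (l : List (D A)) :
    acnt (mset s l) = (l.map acnt).sum := by rw [acnt, attach_map']

@[simp] theorem flip_flip (s : Sign) : s.flip.flip = s := by cases s <;> rfl

@[simp] theorem dual_dual : ∀ α : D A, dual (dual α) = α := by
  refine myInd (fun s g => by simp) (fun s a b ha hb => by simp [ha, hb]) (fun s l ih => ?_)
  simp only [dual_mset, List.map_map, flip_flip, mset.injEq, true_and]
  rw [show l.map (dual ∘ dual) = l.map id from List.map_congr_left (fun x hx => ih x hx),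
    List.map_id]

@[simp] theorem size_dual : ∀ α : D A, size (dual α) = size α := by
  refine myInd (fun s g => by simp) (fun s a b ha hb => by simp [ha, hb]) (fun s l ih => ?_)
  simp only [dual_mset, size_mset, List.map_map, add_right_inj]
  exact congrArg _ (List.map_congr_left fun x hx => ih x hx)

@[simp] theorem acnt_dual : ∀ α : D A, acnt (dual α) = acnt α := by
  refine myInd (fun s g => by cases g <;> simp) (fun s a b ha hb => by simp [ha, hb])
    (fun s l ih => ?_)
  simp only [dual_mset, acnt_mset, List.map_map]
  exact congrArg _ (List.map_congr_left fun x hx => ih x hx)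

theorem one_le_size (α : D A) : 1 ≤ size α := by
  cases α <;> simp <;> omega

theorem subst_dual (σ : A → D A) : ∀ α : D A, subst σ (dual α) = dual (subst σ α) := by
  refine myInd (fun s g => ?_) (fun s a b ha hb => by simp [ha, hb]) (fun s l ih => ?_)
  · cases s <;> cases g <;> simp [Sign.flip]
  · simp only [dual_mset, subst_mset, List.map_map, mset.injEq, true_and]
    exact List.map_congr_left fun x hx => ih x hx

theorem subst_subst (σ τ : A → D A) :
    ∀ α : D A, subst σ (subst τ α) = subst (fun γ => subst σ (τ γ)) α := by
  refine myInd (fun s g => ?_) (fun s a b ha hb => by simp [ha, hb]) (fun s l ih => ?_)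
  · cases s <;> cases g <;> simp [subst_dual]
  · simp only [subst_mset, List.map_map]
    exact congrArg _ (List.map_congr_left fun x hx => ih x hx)

theorem subst_id : ∀ α : D A, subst (fun γ => atom .pos (some γ)) α = α := by
  refine myInd (fun s g => ?_) (fun s a b ha hb => by simp [ha, hb]) (fun s l ih => ?_)
  · cases s <;> cases g <;> simp [Sign.flip]
  · simp only [subst_mset, mset.injEq, true_and]
    rw [show l.map _ = l.map id from List.map_congr_left (fun x hx => ih x hx), List.map_id]

end D
namespace D
variable {A : Type}

@[simp] theorem atoms_atom_some (s : Sign) (γ : A) : atoms (atom s (some γ)) = {γ} := by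
  rw [atoms]
@[simp] theorem atoms_atom_none (s : Sign) : atoms (atom s (none : Option A)) = ∅ := by
  rw [atoms]
@[simp] theorem atoms_pair (s : Sign) (a b : D A) :
    atoms (pair s a b) = atoms a ∪ atoms b := by rw [atoms]
theorem atoms_mset (s : Sign) (l : List (D A)) :
    atoms (mset s l) = (l.map atoms).foldr (· ∪ ·) ∅ := by rw [atoms, attach_map']

theorem mem_atoms_mset {γ : A} {s : Sign} {l : List (D A)} :
    γ ∈ atoms (mset s l) ↔ ∃ x ∈ l, γ ∈ atoms x := by
  rw [atoms_mset]
  induction l with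
  | nil => simp
  | cons a t ih => simp [ih]

theorem isRenaming_pair {σ : A → D A} {s : Sign} {a b : D A} :
    IsRenaming σ (pair s a b) ↔ IsRenaming σ a ∧ IsRenaming σ b := by
  simp [IsRenaming, or_imp, forall_and]

theorem isRenaming_mset {σ : A → D A} {s : Sign} {l : List (D A)} :
    IsRenaming σ (mset s l) ↔ ∀ x ∈ l, IsRenaming σ x := by
  constructor
  · intro h x hx γ hγ; exact h γ (mem_atoms_mset.2 ⟨x, hx, hγ⟩)
  · intro h γ hγ; obtain ⟨x, hx, hγ⟩ := mem_atoms_mset.1 hγ; exact h x hx γ hγ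

theorem list_sum_le {α : Type*} {l : List α} {f g : α → ℕ}
    (h : ∀ x ∈ l, f x ≤ g x) : (l.map f).sum ≤ (l.map g).sum := by
  induction l with
  | nil => simp
  | cons a t ih =>
      simp only [List.map_cons, List.sum_cons]
      exact Nat.add_le_add (h a (by simp)) (ih fun x hx => h x (by simp [hx]))

theorem list_sum_eq_pointwise {α : Type*} {l : List α} {f g : α → ℕ}
    (h : ∀ x ∈ l, f x ≤ g x) (he : (l.map f).sum = (l.map g).sum) :
    ∀ x ∈ l, f x = g x := by
  induction l with
  | nil => simp
  | cons a t ih =>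
      simp only [List.map_cons, List.sum_cons] at he
      have h1 := h a (by simp)
      have h2 : ∀ x ∈ t, f x ≤ g x := fun x hx => h x (by simp [hx])
      have h3 := list_sum_le h2
      intro x hx
      rcases List.mem_cons.1 hx with rfl | hx
      · omega
      · exact ih h2 (by omega) x hx

theorem list_sum_lt {α : Type*} {l : List α} {f g : α → ℕ}
    (h : ∀ x ∈ l, f x ≤ g x) {x0 : α} (hx0 : x0 ∈ l) (hs : f x0 < g x0) :
    (l.map f).sum < (l.map g).sum := by
  induction l with
  | nil => simp at hx0
  | cons a t ih =>
      simp only [List.map_cons, List.sum_cons]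
      have h2 : ∀ x ∈ t, f x ≤ g x := fun x hx => h x (by simp [hx])
      rcases List.mem_cons.1 hx0 with rfl | hx0
      · have := list_sum_le h2; omega
      · have := h a (by simp); have := ih h2 hx0; omega

theorem acnt_le_size : ∀ α : D A, acnt α ≤ size α := by
  refine myInd (fun s g => by cases g <;> simp) (fun s a b ha hb => by simp; omega)
    (fun s l ih => ?_)
  simp only [acnt_mset, size_mset]
  have := list_sum_le ih
  omega

theorem key (σ : A → D A) : ∀ α : D A,
    size α ≤ size (subst σ α) ∧
    (size (subst σ α) = size α →
      acnt (subst σ α) ≤ acnt α ∧ (¬ IsRenaming σ α → acnt (subst σ α) < acnt α)) := by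
  refine myInd (fun s g => ?_) (fun s a b ha hb => ?_) (fun s l ih => ?_)
  · cases g with
    | none =>
        refine ⟨by simp, fun _ => ⟨by simp, fun hn => absurd (fun γ hγ => by simp at hγ) hn⟩⟩
    | some γ =>
        have hsz : size (subst σ (atom s (some γ))) = size (σ γ) := by
          cases s <;> simp
        have hac : acnt (subst σ (atom s (some γ))) = acnt (σ γ) := by
          cases s <;> simp
        rw [hsz, hac]
        refine ⟨by simpa using one_le_size (σ γ), fun h1 => ?_⟩
        simp only [size_atom] at h1
        constructor
        · have := acnt_le_size (σ γ); simp; omega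
        · intro hn
          have hγ : ¬ IsSignedAtom (σ γ) := by
            intro hsa; exact hn (fun γ' hγ' => by simp at hγ'; subst hγ'; exact hsa)
          simp only [acnt_atom_some]
          cases hσ : σ γ with
          | atom s' g' =>
              cases g' with
              | none => simp [hσ]
              | some γ' => exact absurd ⟨s', γ', hσ⟩ hγ
          | pair s' a b =>
              rw [hσ] at h1; simp at h1
              have := one_le_size a; have := one_le_size b; omega
          | mset s' l' =>
              cases l' with
              | nil => simp [hσ]
              | cons a t =>
                  rw [hσ] at h1; simp at h1
                  have := one_le_size a; omega
  · obtain ⟨ha1, ha2⟩ := ha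
    obtain ⟨hb1, hb2⟩ := hb
    simp only [subst_pair, size_pair, acnt_pair]
    refine ⟨by omega, fun h1 => ?_⟩
    have hea : size (subst σ a) = size a := by omega
    have heb : size (subst σ b) = size b := by omega
    obtain ⟨ha3, ha4⟩ := ha2 hea
    obtain ⟨hb3, hb4⟩ := hb2 heb
    refine ⟨by omega, fun hn => ?_⟩
    rw [isRenaming_pair] at hn
    rcases not_and_or.1 hn with h | h
    · have := ha4 h; omega
    · have := hb4 h; omega
  · simp only [subst_mset, size_mset, acnt_mset, List.map_map]
    have h1 : ∀ x ∈ l, size x ≤ (size ∘ subst σ) x := fun x hx => (ih x hx).1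
    refine ⟨by have := list_sum_le h1; omega, fun he => ?_⟩
    have he' : ∀ x ∈ l, size x = (size ∘ subst σ) x :=
      list_sum_eq_pointwise h1 (by omega)
    have h2 : ∀ x ∈ l, (acnt ∘ subst σ) x ≤ acnt x :=
      fun x hx => ((ih x hx).2 (he' x hx).symm).1
    refine ⟨list_sum_le h2, fun hn => ?_⟩
    rw [isRenaming_mset] at hn
    push_neg at hn
    obtain ⟨x0, hx0, hx0r⟩ := hn
    exact list_sum_lt h2 hx0 (((ih x0 hx0).2 (he' x0 hx0).symm).2 hx0r)

end D
theorem measure_lemma {sz az sy ay : ℕ} (haz : az ≤ sz) (hay : ay ≤ sy)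
    (h : sz < sy ∨ (sz = sy ∧ ay < az)) :
    sz * (sz + 1) - az < sy * (sy + 1) - ay := by
  rcases h with h | ⟨rfl, h⟩
  · have hX : sz * (sz + 1) + ay + 1 ≤ sy * (sy + 1) := by nlinarith
    have : az ≤ sz * (sz + 1) := le_trans haz (Nat.le_mul_of_pos_right _ (by omega))
    omega
  · have : az ≤ sz * (sz + 1) := le_trans haz (Nat.le_mul_of_pos_right _ (by omega))
    omega

theorem exists_atomic_generator' {A P : Type} [Fintype P]
    (𝒟 : Set (P → D A)) (y : P → D A) (hy : y ∈ 𝒟) :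
    ∃ x ∈ atomicSet 𝒟, ∃ σ : A → D A, substOn σ x = y := by
  classical
  set μ : (P → D A) → ℕ := fun z =>
    (∑ p, D.size (z p)) * ((∑ p, D.size (z p)) + 1) - ∑ p, D.acnt (z p) with hμdef
  suffices H : ∀ n (y : P → D A), μ y ≤ n → y ∈ 𝒟 →
      ∃ x ∈ atomicSet 𝒟, ∃ σ : A → D A, substOn σ x = y from H (μ y) y le_rfl hy
  intro n
  induction n using Nat.strong_induction_on with
  | _ n IH =>
    intro y hμ hy
    by_cases hat : y ∈ atomicSet 𝒟
    · exact ⟨y, hat, fun γ => D.atom .pos (some γ), funext fun p => D.subst_id (y p)⟩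
    · simp only [atomicSet, Set.mem_setOf_eq, not_and, not_forall] at hat
      obtain ⟨σ, z, hz, heq, hnr⟩ := hat hy
      -- measure decreases
      have hsize : ∀ p, D.size (z p) ≤ D.size (y p) := fun p => by
        rw [← heq]; exact (D.key σ (z p)).1
      have hsz : (∑ p, D.size (z p)) ≤ ∑ p, D.size (y p) :=
        Finset.sum_le_sum fun p _ => hsize p
      have haz : (∑ p, D.acnt (z p)) ≤ ∑ p, D.size (z p) :=
        Finset.sum_le_sum fun p _ => D.acnt_le_size (z p)
      have hay : (∑ p, D.acnt (y p)) ≤ ∑ p, D.size (y p) :=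
        Finset.sum_le_sum fun p _ => D.acnt_le_size (y p)
      have hdec : μ z < μ y := by
        apply measure_lemma haz hay
        rcases lt_or_eq_of_le hsz with h | h
        · exact Or.inl h
        · refine Or.inr ⟨h, ?_⟩
          have hpt : ∀ p ∈ Finset.univ, D.size (z p) = D.size (y p) :=
            (Finset.sum_eq_sum_iff_of_le fun p _ => hsize p).1 h
          have hle : ∀ p, D.acnt (y p) ≤ D.acnt (z p) := fun p => by
            rw [← heq]
            exact ((D.key σ (z p)).2 (by
              rw [show D.subst σ (z p) = y p from congrFun heq p]
              exact (hpt p (Finset.mem_univ p)).symm)).1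
          simp only [RenamingOn, not_forall] at hnr
          obtain ⟨p0, hp0⟩ := hnr
          have hlt : D.acnt (y p0) < D.acnt (z p0) := by
            rw [← heq]
            exact ((D.key σ (z p0)).2 (by
              rw [show D.subst σ (z p0) = y p0 from congrFun heq p0]
              exact (hpt p0 (Finset.mem_univ p0)).symm)).2 hp0
          exact Finset.sum_lt_sum (fun p _ => hle p) ⟨p0, Finset.mem_univ p0, hlt⟩
      obtain ⟨x, hx, τ, hτ⟩ := IH (μ z) (lt_of_lt_of_le hdec hμ) z le_rfl hz
      refine ⟨x, hx, fun γ => D.subst σ (τ γ), ?_⟩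
      rw [← heq, ← hτ]
      funext p
      exact (D.subst_subst σ τ (x p)).symm

/-- atomic points generate. -/
theorem exists_atomic_generator {A P : Type} [Fintype P]
    (𝒟 : Set (P → D A)) (y : P → D A) (hy : y ∈ 𝒟) :
    ∃ x ∈ atomicSet 𝒟, ∃ σ : A → D A, substOn σ x = y :=
  exists_atomic_generator' 𝒟 y hy
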